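/- arXiv:math/0604027 — 8 statements merged into one kernel-verified Lean document; each statement's English description precedes it below -/
import Mathlib

section
/- Algebraic core of the prequantization theorem (Theorem: 'There exists a Hermitian representation of the Lie algebroid A on (L → M, h) given by π(X) := ∇_{α(X)} − 2πi⟨μ̃, J*X⟩', the Kostant formula): Let L be an A-module, let D : g → End_ℝ(L) be an ℝ-linear map satisfying the Leibniz rule over α and having curvature ω along the action, and let μ : g → A be an ℝ-linear map satisfying the prequantization condition for ω. Define π(X)(s) := D(X)(s) − ((2πi) • μ(X)) • s. Then each π(X) satisfies the Leibniz rule over α, and π is a Lie algebra homomorphism: π([X,Y]) = π(X) ∘ π(Y) − π(Y) ∘ π(X) for all X, Y ∈ g. -/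
/-!
Twisting operators `P`, `Q` that satisfy Leibniz rules by multiplication operators `a`, `b`
changes their commutator only by the multiplication operator `δ b - ε a`, because
multiplication operators commute (`A` is commutative). For `π = D - 2πi μ` this extra term
is `2πi (α X (μ Y) - α Y (μ X))`, and by the prequantization condition it cancels exactly
the curvature `2πi ω(X, Y)` of `D`.
-/

section Twist

variable {A L : Type*} [CommRing A] [AddCommGroup L] [Module A L]

theorem leibniz_sub_smul {P : L → L} {δ : A → A} (hP : ∀ a s, P (a • s) = a • P s + δ a • s)
    (m a : A) (s : L) :
    P (a • s) - m • (a • s) = a • (P s - m • s) + δ a • s := by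
  rw [hP, smul_sub, smul_smul, smul_smul, mul_comm a]
  abel

theorem commutator_sub_smul {F : Type*} [FunLike F L L] [AddMonoidHomClass F L L]
    {P Q : F} {δ ε : A → A}
    (hP : ∀ a s, P (a • s) = a • P s + δ a • s) (hQ : ∀ a s, Q (a • s) = a • Q s + ε a • s)
    (a b : A) (s : L) :
    (P (Q s - b • s) - a • (Q s - b • s)) - (Q (P s - a • s) - b • (P s - a • s))
      = P (Q s) - Q (P s) - (δ b - ε a) • s := by
  rw [map_sub, map_sub, hP, hQ, smul_sub, smul_sub, smul_smul, smul_smul, mul_comm b a,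
    sub_smul]
  abel

end Twist

theorem prequantization_kostant_formula_general
    {A : Type*} [CommRing A] [Algebra ℂ A]
    {g : Type*} [LieRing g] [LieAlgebra ℝ g]
    {L : Type*} [AddCommGroup L] [Module A L] [Module ℝ L]
    (α : g →ₗ[ℝ] Derivation ℂ A A)
    (D : g →ₗ[ℝ] L →ₗ[ℝ] L)
    (hD : ∀ (X : g) (a : A) (s : L), D X (a • s) = a • D X s + α X a • s)
    (ω : g →ₗ[ℝ] g →ₗ[ℝ] A)
    (hcurv : ∀ (X Y : g) (s : L),
      D X (D Y s) - D Y (D X s) - D ⁅X, Y⁆ s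
        = ((2 * (Real.pi : ℂ) * Complex.I) • ω X Y) • s)
    (μ : g →ₗ[ℝ] A)
    (hμ : ∀ X Y : g, μ ⁅X, Y⁆ - α X (μ Y) + α Y (μ X) = - ω X Y)
    (π : g → L → L)
    (hπ : ∀ (X : g) (s : L),
      π X s = D X s - ((2 * (Real.pi : ℂ) * Complex.I) • μ X) • s) :
    (∀ (X : g) (a : A) (s : L), π X (a • s) = a • π X s + α X a • s) ∧
    (∀ (X Y : g) (s : L), π ⁅X, Y⁆ s = π X (π Y s) - π Y (π X s)) := by
  set c : ℂ := 2 * (Real.pi : ℂ) * Complex.I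
  refine ⟨fun X a s => ?_, fun X Y s => ?_⟩
  · simpa only [hπ] using leibniz_sub_smul (hD X) (c • μ X) a s
  · have hcμ : c • μ ⁅X, Y⁆ = α X (c • μ Y) - α Y (c • μ X) - c • ω X Y := by
      rw [Derivation.map_smul, Derivation.map_smul, ← smul_sub, ← smul_sub]
      congr 1
      linear_combination hμ X Y
    simp only [hπ]
    rw [commutator_sub_smul (hD X) (hD Y), hcμ, sub_smul, ← hcurv X Y s]
    abel

/-- **Algebraic core of the prequantization theorem (Kostant formula).**
`A` models complex-valued smooth functions on `S`, `g` the sections of the acting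
Lie algebroid, `α` the infinitesimal action by derivations, `L` the sections of a
line bundle, `D` a connection-type operator with curvature `ω` along the action,
and `μ` a momentum map satisfying the prequantization condition.  Then
`π(X) s = D(X) s − ((2πi) • μ(X)) • s` satisfies the Leibniz rule over `α` and is
a Lie algebra homomorphism. -/
theorem prequantization_kostant_formula
    {A : Type*} [CommRing A] [Algebra ℂ A]
    {g : Type*} [LieRing g] [LieAlgebra ℝ g]
    {L : Type*} [AddCommGroup L] [Module A L] [Module ℝ L]
    (α : g →ₗ[ℝ] Derivation ℂ A A)
    (hα : ∀ (X Y : g) (a : A), α ⁅X, Y⁆ a = α X (α Y a) - α Y (α X a))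
    (D : g →ₗ[ℝ] L →ₗ[ℝ] L)
    (hD : ∀ (X : g) (a : A) (s : L), D X (a • s) = a • D X s + α X a • s)
    (ω : g →ₗ[ℝ] g →ₗ[ℝ] A)
    (hωalt : ∀ X : g, ω X X = 0)
    (hcurv : ∀ (X Y : g) (s : L),
      D X (D Y s) - D Y (D X s) - D ⁅X, Y⁆ s
        = ((2 * (Real.pi : ℂ) * Complex.I) • ω X Y) • s)
    (μ : g →ₗ[ℝ] A)
    (hμ : ∀ X Y : g, μ ⁅X, Y⁆ - α X (μ Y) + α Y (μ X) = - ω X Y)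
    (π : g → L → L)
    (hπ : ∀ (X : g) (s : L),
      π X s = D X s - ((2 * (Real.pi : ℂ) * Complex.I) • μ X) • s) :
    (∀ (X : g) (a : A) (s : L), π X (a • s) = a • π X s + α X a • s) ∧
    (∀ (X Y : g) (s : L), π ⁅X, Y⁆ s = π X (π Y s) - π Y (π X s)) :=
  prequantization_kostant_formula_general α D hD ω hcurv μ hμ π hπ
end

section
/- Hermitian property of the prequantization representation (second part of the theorem 'There exists a Hermitian representation of the Lie algebroid A on (L → M, h) given by π(X) := ∇_{α(X)} − 2πi⟨μ̃, J*X⟩'): Let L be an A-module with a Hermitian metric h, let D : g → End_ℝ(L) satisfy the Leibniz rule over α and be Hermitian with respect to h, and let μ : g → A satisfy star(μ(X)) = μ(X) for all X ∈ g (the momentum is real-valued). Then π(X)(s) := D(X)(s) − ((2πi) • μ(X)) • s satisfies h(π(X)(s), t) + h(s, π(X)(t)) = α(X)(h(s, t)) for all X ∈ g and s, t ∈ L. -/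
section SesquilinearPairing

variable {A L : Type*} [CommRing A] [StarRing A] [AddCommGroup L] [Module A L]
  (h : L → L → A)

/-- The multiplication terms cancel: perturbing an operator by a skew-adjoint multiplication
operator `b • ·` leaves `h (T s) t + h s (T t)` unchanged. -/
theorem pairing_sub_smul_add_pairing_sub_smul
    (haddl : ∀ (s s' t : L), h (s + s') t = h s t + h s' t)
    (haddr : ∀ (s t t' : L), h s (t + t') = h s t + h s t')
    (hsmull : ∀ (a : A) (s t : L), h (a • s) t = star a * h s t)
    (hsmulr : ∀ (a : A) (s t : L), h s (a • t) = a * h s t)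
    {b : A} (hb : star b = -b) (u s v t : L) :
    h (u - b • s) t + h s (v - b • t) = h u t + h s v := by
  have hsubl : h (u - b • s) t = h u t - h (b • s) t :=
    map_sub (AddMonoidHom.mk' (h · t) (haddl · · t)) u (b • s)
  have hsubr : h s (v - b • t) = h s v - h s (b • t) :=
    map_sub (AddMonoidHom.mk' (h s) (haddr s)) v (b • t)
  rw [hsubl, hsubr, hsmull, hsmulr, hb]
  ring

end SesquilinearPairing

theorem Complex.conj_two_pi_I :
    starRingEnd ℂ (2 * (Real.pi : ℂ) * Complex.I) = -(2 * (Real.pi : ℂ) * Complex.I) := by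
  rw [map_mul, map_mul, Complex.conj_I, Complex.conj_ofReal, map_ofNat]
  ring

theorem star_smul_eq_neg_of_conj_eq_neg {A : Type*} [AddCommGroup A] [Module ℂ A] [Star A]
    (hstarA : ∀ (c : ℂ) (a : A), star (c • a) = (starRingEnd ℂ c) • star a)
    {c : ℂ} (hc : starRingEnd ℂ c = -c) {a : A} (ha : star a = a) :
    star (c • a) = -(c • a) := by
  rw [hstarA, hc, ha, neg_smul]

theorem prequantization_representation_hermitian_general
    {A : Type*} [CommRing A] [Algebra ℂ A] [StarRing A]
    {g : Type*} [LieRing g] [LieAlgebra ℝ g]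
    {L : Type*} [AddCommGroup L] [Module A L] [Module ℝ L]
    (hstarA : ∀ (c : ℂ) (a : A), star (c • a) = (starRingEnd ℂ c) • star a)
    (α : g →ₗ[ℝ] Derivation ℂ A A)
    (h : L → L → A)
    (haddl : ∀ (s s' t : L), h (s + s') t = h s t + h s' t)
    (haddr : ∀ (s t t' : L), h s (t + t') = h s t + h s t')
    (hsmull : ∀ (a : A) (s t : L), h (a • s) t = star a * h s t)
    (hsmulr : ∀ (a : A) (s t : L), h s (a • t) = a * h s t)
    (D : g →ₗ[ℝ] L →ₗ[ℝ] L)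
    (hDherm : ∀ (X : g) (s t : L), h (D X s) t + h s (D X t) = α X (h s t))
    (μ : g →ₗ[ℝ] A)
    (hμreal : ∀ X : g, star (μ X) = μ X)
    (π : g → L → L)
    (hπ : ∀ (X : g) (s : L),
      π X s = D X s - ((2 * (Real.pi : ℂ) * Complex.I) • μ X) • s) :
    ∀ (X : g) (s t : L), h (π X s) t + h s (π X t) = α X (h s t) := by
  intro X s t
  have hskew := star_smul_eq_neg_of_conj_eq_neg hstarA Complex.conj_two_pi_I (hμreal X)
  rw [hπ, hπ, pairing_sub_smul_add_pairing_sub_smul h haddl haddr hsmull hsmulr hskew,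
    hDherm]

/-- **Hermitian property of the prequantization representation.**
If `D` satisfies the Leibniz rule over `α` and is Hermitian with respect to the
Hermitian metric `h`, and the momentum `μ` is real-valued (`star (μ X) = μ X`),
then `π(X) s = D(X) s − ((2πi) • μ(X)) • s` is Hermitian with respect to `h`. -/
theorem prequantization_representation_hermitian
    {A : Type*} [CommRing A] [Algebra ℂ A] [StarRing A]
    {g : Type*} [LieRing g] [LieAlgebra ℝ g]
    {L : Type*} [AddCommGroup L] [Module A L] [Module ℝ L]
    (hstarA : ∀ (c : ℂ) (a : A), star (c • a) = (starRingEnd ℂ c) • star a)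
    (α : g →ₗ[ℝ] Derivation ℂ A A)
    (hα : ∀ (X Y : g) (a : A), α ⁅X, Y⁆ a = α X (α Y a) - α Y (α X a))
    (h : L → L → A)
    (haddl : ∀ (s s' t : L), h (s + s') t = h s t + h s' t)
    (haddr : ∀ (s t t' : L), h s (t + t') = h s t + h s t')
    (hsmull : ∀ (a : A) (s t : L), h (a • s) t = star a * h s t)
    (hsmulr : ∀ (a : A) (s t : L), h s (a • t) = a * h s t)
    (D : g →ₗ[ℝ] L →ₗ[ℝ] L)
    (hD : ∀ (X : g) (a : A) (s : L), D X (a • s) = a • D X s + α X a • s)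
    (hDherm : ∀ (X : g) (s t : L), h (D X s) t + h s (D X t) = α X (h s t))
    (μ : g →ₗ[ℝ] A)
    (hμreal : ∀ X : g, star (μ X) = μ X)
    (π : g → L → L)
    (hπ : ∀ (X : g) (s : L),
      π X s = D X s - ((2 * (Real.pi : ℂ) * Complex.I) • μ X) • s) :
    ∀ (X : g) (s t : L), h (π X s) t + h s (π X t) = α X (h s t) :=
  prequantization_representation_hermitian_general hstarA α h haddl haddr hsmull hsmulr D hDherm μ
    hμreal π hπ
end

section
/- Algebraic core of the Kähler quantization theorem (Theorem: 'the geometric quantization Q(S, ω̃) carries a Hermitian representation of A'): Let L be an A-module, let V, ∇, Ω be as in the context, and let μ : g → A be an ℝ-linear map satisfying the quantization condition and also the prequantization condition for ω, where ω(X,Y) := Ω(α(X), α(Y)). Let P ⊆ V be a subset (the Kähler polarization) such that [α(X), v] ∈ P for all X ∈ g and v ∈ P, and let Q := {s ∈ L : ∇(v)(s) = 0 for all v ∈ P} be the set of polarized (holomorphic) sections. Then π(X)(s) := ∇(α(X))(s) − ((2πi) • μ(X)) • s maps Q into Q for every X ∈ g, and on Q the map π is a Lie algebra homomorphism: π([X,Y])(s)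 = π(X)(π(Y)(s)) − π(Y)(π(X)(s)) for all X, Y ∈ g and s ∈ Q. -/
/-!
Write `K(u, f) s = ∇_u s - (c • f) • s` with `c = 2πi`, so that `π X = K(α X, μ X)`.
For a flat section `s` along `w ∈ P`, the curvature identity gives
`∇_w ∇_u s = -(c • Ω(u, w)) • s`, which the quantization condition `w (μ X) = -Ω(α X, w)`
cancels exactly; invariance of `P` is what makes `∇_{[u, w]} s` vanish.
For the homomorphism property, the Leibniz rule expands
`K(u, f) K(w, h) - K(w, h) K(u, f)` into `K([u, w], u h - w f - Ω(u, w))` by the curvature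
identity alone, and the prequantization condition identifies the second argument with `μ[X, Y]`.
-/

section KostantOperator

variable {k A L R : Type*} [CommRing k] [CommRing A] [Algebra k A]
  [AddCommGroup L] [Module A L] [Semiring R] [Module R L]
  (nabla : Derivation k A A → L →ₗ[R] L) (c : k)

def kostantOperator (v : Derivation k A A) (f : A) (s : L) : L :=
  nabla v s - (c • f) • s

variable {nabla c}

theorem nabla_kostantOperator_eq_zero {u w : Derivation k A A} {f ω : A} {s : L}
    (hleib : ∀ (a : A) (t : L), nabla w (a • t) = a • nabla w t + w a • t)
    (hcurv : nabla u (nabla w s) - nabla w (nabla u s) - nabla ⁅u, w⁆ s = (c • ω) • s)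
    (hf : w f = -ω) (hws : nabla w s = 0) (hbr : nabla ⁅u, w⁆ s = 0) :
    nabla w (kostantOperator nabla c u f s) = 0 := by
  have hwu : nabla w (nabla u s) = -((c • ω) • s) := by
    rw [← hcurv, hws, hbr, map_zero]
    abel
  rw [kostantOperator, map_sub, hwu, hleib, hws, Derivation.map_smul, hf]
  simp only [smul_zero, zero_add, smul_neg, neg_smul, sub_neg_eq_add, neg_add_cancel]

theorem kostantOperator_kostantOperator {u w : Derivation k A A} {f h : A} {s : L}
    (hleib : ∀ (a : A) (t : L), nabla u (a • t) = a • nabla u t + u a • t) :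
    kostantOperator nabla c u f (kostantOperator nabla c w h s)
      = nabla u (nabla w s) - (c • h) • nabla u s - (c • u h) • s
        - (c • f) • nabla w s + ((c • f) * (c • h)) • s := by
  simp only [kostantOperator, map_sub, hleib, Derivation.map_smul, smul_sub, smul_smul]
  abel

theorem kostantOperator_lie {u w : Derivation k A A} {f h ω : A} {s : L}
    (hleib_u : ∀ (a : A) (t : L), nabla u (a • t) = a • nabla u t + u a • t)
    (hleib_w : ∀ (a : A) (t : L), nabla w (a • t) = a • nabla w t + w a • t)
    (hcurv : nabla u (nabla w s) - nabla w (nabla u s) - nabla ⁅u, w⁆ s = (c • ω) • s) :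
    kostantOperator nabla c ⁅u, w⁆ (u h - w f - ω) s
      = kostantOperator nabla c u f (kostantOperator nabla c w h s)
        - kostantOperator nabla c w h (kostantOperator nabla c u f s) := by
  have hbr : nabla ⁅u, w⁆ s = nabla u (nabla w s) - nabla w (nabla u s) - (c • ω) • s := by
    rw [← hcurv]
    abel
  rw [kostantOperator_kostantOperator hleib_u, kostantOperator_kostantOperator hleib_w,
    kostantOperator, hbr, mul_comm (c • h)]
  simp only [smul_sub, sub_smul]
  abel

end KostantOperator

theorem kaehler_quantization_representation_general
    {A : Type*} [CommRing A] [Algebra ℂ A]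
    {g : Type*} [LieRing g] [LieAlgebra ℝ g]
    {L : Type*} [AddCommGroup L] [Module A L] [Module ℝ L]
    (α : g →ₗ[ℝ] Derivation ℂ A A)
    (hα : ∀ (X Y : g) (a : A), α ⁅X, Y⁆ a = α X (α Y a) - α Y (α X a))
    (V : Set (Derivation ℂ A A))
    (hαV : ∀ X : g, α X ∈ V)
    (nabla : Derivation ℂ A A → L →ₗ[ℝ] L)
    (hnabla : ∀ v ∈ V, ∀ (a : A) (s : L), nabla v (a • s) = a • nabla v s + v a • s)
    (Ω : Derivation ℂ A A → Derivation ℂ A A → A)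
    (hcurv : ∀ v ∈ V, ∀ w ∈ V, ∀ s : L,
      nabla v (nabla w s) - nabla w (nabla v s) - nabla ⁅v, w⁆ s
        = ((2 * (Real.pi : ℂ) * Complex.I) • Ω v w) • s)
    (μ : g →ₗ[ℝ] A)
    (hquant : ∀ (X : g), ∀ v ∈ V, v (μ X) = - Ω (α X) v)
    (hpreq : ∀ X Y : g, μ ⁅X, Y⁆ - α X (μ Y) + α Y (μ X) = - Ω (α X) (α Y))
    (P : Set (Derivation ℂ A A)) (hPV : P ⊆ V)
    (hPinv : ∀ (X : g), ∀ v ∈ P, ⁅α X, v⁆ ∈ P)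
    (π : g → L → L)
    (hπ : ∀ (X : g) (s : L),
      π X s = nabla (α X) s - ((2 * (Real.pi : ℂ) * Complex.I) • μ X) • s) :
    (∀ (X : g) (s : L), (∀ v ∈ P, nabla v s = 0) → ∀ v ∈ P, nabla v (π X s) = 0) ∧
    (∀ (X Y : g) (s : L), (∀ v ∈ P, nabla v s = 0) →
      π ⁅X, Y⁆ s = π X (π Y s) - π Y (π X s)) := by
  have hπK : ∀ X s,
      π X s = kostantOperator nabla (2 * (Real.pi : ℂ) * Complex.I) (α X) (μ X) s := hπ
  refine ⟨fun X s hs v hv => ?_, fun X Y s _ => ?_⟩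
  · rw [hπK]
    exact nabla_kostantOperator_eq_zero (hnabla v (hPV hv)) (hcurv _ (hαV X) v (hPV hv) s)
      (hquant X v (hPV hv)) (hs v hv) (hs _ (hPinv X v hv))
  · have hαlie : α ⁅X, Y⁆ = ⁅α X, α Y⁆ := by
      ext a
      exact hα X Y a
    have hμlie : μ ⁅X, Y⁆ = α X (μ Y) - α Y (μ X) - Ω (α X) (α Y) := by
      linear_combination hpreq X Y
    rw [hπK, hπK, hπK, hπK, hπK, hαlie, hμlie]
    exact kostantOperator_lie (hnabla _ (hαV X)) (hnabla _ (hαV Y))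
      (hcurv _ (hαV X) _ (hαV Y) s)

/-- **Algebraic core of the Kähler quantization theorem.**
`V` models the vector fields tangent to the fibers of `J̃` (a Lie subalgebra of the
derivations of `A`), `∇` a partial connection on `L` with curvature `Ω`, `μ` a
momentum map satisfying both the quantization and prequantization conditions, and
`P ⊆ V` the Kähler polarization, invariant under bracketing with the action vector
fields.  Then the Kostant operator `π(X) s = ∇(α X) s − ((2πi) • μ(X)) • s`
preserves the space `Q` of polarized (holomorphic) sections and is a Lie algebra
homomorphism on `Q`. -/
theorem kaehler_quantization_representation
    {A : Type*} [CommRing A] [Algebra ℂ A]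
    {g : Type*} [LieRing g] [LieAlgebra ℝ g]
    {L : Type*} [AddCommGroup L] [Module A L] [Module ℝ L]
    (α : g →ₗ[ℝ] Derivation ℂ A A)
    (hα : ∀ (X Y : g) (a : A), α ⁅X, Y⁆ a = α X (α Y a) - α Y (α X a))
    (V : Set (Derivation ℂ A A))
    (hVadd : ∀ v ∈ V, ∀ w ∈ V, v + w ∈ V)
    (hVsmul : ∀ (r : ℝ), ∀ v ∈ V, r • v ∈ V)
    (hVlie : ∀ v ∈ V, ∀ w ∈ V, ⁅v, w⁆ ∈ V)
    (hαV : ∀ X : g, α X ∈ V)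
    (nabla : Derivation ℂ A A → L →ₗ[ℝ] L)
    (hnabla : ∀ v ∈ V, ∀ (a : A) (s : L), nabla v (a • s) = a • nabla v s + v a • s)
    (Ω : Derivation ℂ A A → Derivation ℂ A A → A)
    (hΩalt : ∀ v ∈ V, Ω v v = 0)
    (hΩanti : ∀ v ∈ V, ∀ w ∈ V, Ω v w = - Ω w v)
    (hcurv : ∀ v ∈ V, ∀ w ∈ V, ∀ s : L,
      nabla v (nabla w s) - nabla w (nabla v s) - nabla ⁅v, w⁆ s
        = ((2 * (Real.pi : ℂ) * Complex.I) • Ω v w) • s)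
    (μ : g →ₗ[ℝ] A)
    (hquant : ∀ (X : g), ∀ v ∈ V, v (μ X) = - Ω (α X) v)
    (hpreq : ∀ X Y : g, μ ⁅X, Y⁆ - α X (μ Y) + α Y (μ X) = - Ω (α X) (α Y))
    (P : Set (Derivation ℂ A A)) (hPV : P ⊆ V)
    (hPinv : ∀ (X : g), ∀ v ∈ P, ⁅α X, v⁆ ∈ P)
    (π : g → L → L)
    (hπ : ∀ (X : g) (s : L),
      π X s = nabla (α X) s - ((2 * (Real.pi : ℂ) * Complex.I) • μ X) • s) :
    (∀ (X : g) (s : L), (∀ v ∈ P, nabla v s = 0) → ∀ v ∈ P, nabla v (π X s) = 0) ∧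
    (∀ (X Y : g) (s : L), (∀ v ∈ P, nabla v s = 0) →
      π ⁅X, Y⁆ s = π X (π Y s) - π Y (π X s)) :=
  kaehler_quantization_representation_general α hα V hαV nabla hnabla Ω hcurv μ hquant hpreq P hPV
    hPinv π hπ
end

section
/- Equivariance of the prequantization connection (Lemma: 'for any prequantization representation of A on a line bundle L → S, the given connection ∇ on L is A-equivariant, i.e. [π(X), ∇_v] = ∇_{[α(X), v]}'): Let L be an A-module, let V, ∇, Ω be as in the context, and let μ : g → A be an ℝ-linear map satisfying the quantization condition. Define π(X)(s) := ∇(α(X))(s) − ((2πi) • μ(X)) • s. Then π(X) ∘ ∇(v) − ∇(v) ∘ π(X) = ∇([α(X), v]) for all X ∈ g and v ∈ V. -/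
/-! The Kostant operator `π(X) = ∇_{α X} − 2πi μ(X)` differs from `∇_{α X}` by a multiplication
operator, so by the Leibniz rule `[π(X), ∇_v] = [∇_{α X}, ∇_v] + 2πi v(μ X)`. The curvature
identity turns the first term into `∇_{[α X, v]} + 2πi Ω(α X, v)`, and the quantization condition
`v(μ X) = −Ω(α X, v)` cancels the two scalar terms. -/

theorem commutator_sub_smul_of_leibniz {A L F : Type*} [AddCommGroup L] [SMul A L]
    [FunLike F L L] [AddMonoidHomClass F L L] (P : L → L) (Q : F) (a b : A) (s : L)
    (hQ : Q (a • s) = a • Q s + b • s) :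
    (P (Q s) - a • Q s) - Q (P s - a • s) = P (Q s) - Q (P s) + b • s := by
  rw [map_sub, hQ]
  abel

theorem prequantization_connection_equivariant_general
    {A : Type*} [CommRing A] [Algebra ℂ A]
    {g : Type*} [LieRing g] [LieAlgebra ℝ g]
    {L : Type*} [AddCommGroup L] [Module A L] [Module ℝ L]
    (α : g →ₗ[ℝ] Derivation ℂ A A)
    (V : Set (Derivation ℂ A A))
    (hαV : ∀ X : g, α X ∈ V)
    (nabla : Derivation ℂ A A → L →ₗ[ℝ] L)
    (hnabla : ∀ v ∈ V, ∀ (a : A) (s : L), nabla v (a • s) = a • nabla v s + v a • s)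
    (Ω : Derivation ℂ A A → Derivation ℂ A A → A)
    (hcurv : ∀ v ∈ V, ∀ w ∈ V, ∀ s : L,
      nabla v (nabla w s) - nabla w (nabla v s) - nabla ⁅v, w⁆ s
        = ((2 * (Real.pi : ℂ) * Complex.I) • Ω v w) • s)
    (μ : g →ₗ[ℝ] A)
    (hquant : ∀ (X : g), ∀ v ∈ V, v (μ X) = - Ω (α X) v)
    (π : g → L → L)
    (hπ : ∀ (X : g) (s : L),
      π X s = nabla (α X) s - ((2 * (Real.pi : ℂ) * Complex.I) • μ X) • s) :
    ∀ (X : g), ∀ v ∈ V, ∀ s : L,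
      π X (nabla v s) - nabla v (π X s) = nabla ⁅α X, v⁆ s := by
  intro X v hv s
  set c : ℂ := 2 * (Real.pi : ℂ) * Complex.I
  have hcancel : c • Ω (α X) v + v (c • μ X) = 0 := by
    rw [v.map_smul, hquant X v hv, smul_neg, add_neg_cancel]
  calc π X (nabla v s) - nabla v (π X s)
      = nabla (α X) (nabla v s) - nabla v (nabla (α X) s) + v (c • μ X) • s := by
        rw [hπ, hπ]
        exact commutator_sub_smul_of_leibniz _ (nabla v) _ _ s (hnabla v hv _ s)
    _ = nabla ⁅α X, v⁆ s + (c • Ω (α X) v + v (c • μ X)) • s := by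
        rw [sub_eq_iff_eq_add'.mp (hcurv _ (hαV X) v hv s), add_smul, add_assoc]
    _ = nabla ⁅α X, v⁆ s := by
        rw [hcancel, zero_smul, add_zero]

/-- **Equivariance of the prequantization connection.**
For the Kostant operator `π(X) s = ∇(α X) s − ((2πi) • μ(X)) • s` built from a
partial connection `∇` with curvature `Ω` and a momentum `μ` satisfying the
quantization condition, one has `[π(X), ∇_v] = ∇_{[α X, v]}` for all `X ∈ g` and
`v ∈ V`. -/
theorem prequantization_connection_equivariant
    {A : Type*} [CommRing A] [Algebra ℂ A]
    {g : Type*} [LieRing g] [LieAlgebra ℝ g]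
    {L : Type*} [AddCommGroup L] [Module A L] [Module ℝ L]
    (α : g →ₗ[ℝ] Derivation ℂ A A)
    (hα : ∀ (X Y : g) (a : A), α ⁅X, Y⁆ a = α X (α Y a) - α Y (α X a))
    (V : Set (Derivation ℂ A A))
    (hVadd : ∀ v ∈ V, ∀ w ∈ V, v + w ∈ V)
    (hVsmul : ∀ (r : ℝ), ∀ v ∈ V, r • v ∈ V)
    (hVlie : ∀ v ∈ V, ∀ w ∈ V, ⁅v, w⁆ ∈ V)
    (hαV : ∀ X : g, α X ∈ V)
    (nabla : Derivation ℂ A A → L →ₗ[ℝ] L)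
    (hnabla : ∀ v ∈ V, ∀ (a : A) (s : L), nabla v (a • s) = a • nabla v s + v a • s)
    (Ω : Derivation ℂ A A → Derivation ℂ A A → A)
    (hΩalt : ∀ v ∈ V, Ω v v = 0)
    (hΩanti : ∀ v ∈ V, ∀ w ∈ V, Ω v w = - Ω w v)
    (hcurv : ∀ v ∈ V, ∀ w ∈ V, ∀ s : L,
      nabla v (nabla w s) - nabla w (nabla v s) - nabla ⁅v, w⁆ s
        = ((2 * (Real.pi : ℂ) * Complex.I) • Ω v w) • s)
    (μ : g →ₗ[ℝ] A)
    (hquant : ∀ (X : g), ∀ v ∈ V, v (μ X) = - Ω (α X) v)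
    (π : g → L → L)
    (hπ : ∀ (X : g) (s : L),
      π X s = nabla (α X) s - ((2 * (Real.pi : ℂ) * Complex.I) • μ X) • s) :
    ∀ (X : g), ∀ v ∈ V, ∀ s : L,
      π X (nabla v s) - nabla v (π X s) = nabla ⁅α X, v⁆ s :=
  prequantization_connection_equivariant_general α V hαV nabla hnabla Ω hcurv μ hquant π hπ
end

section
/- Every Hermitian representation on a line bundle has Kostant form (Proposition: 'Any Hermitian representation of a Lie algebroid A on a line bundle L → S is of the form π(J*X) = ∇_{α(X)} − 2πi⟨μ̃, J*X⟩'): Let L be an A-module with a Hermitian metric h such that (i) the map sending a ∈ A to the scalar-multiplication endomorphism s ↦ a • s is a bijection from A onto the A-module endomorphisms of L (L is a line-bundle module), and (ii) there exist s₀, t₀ ∈ L with h(s₀, t₀) = 1. Let D : g → End_ℝ(L) satisfy the Leibniz rule over α and be Hermitian with respect to h, and let π : g → End_ℝ(L) also satisfy the Leibniz rule over α and be Hermitian with respect to h. Then there is a unique map μ : g → A such that π(X)(s) = D(X)(s) − ((2πi) • μ(X)) • s for all X ∈ g and s ∈ L, and this μ satisfies star(μ(X)) = μ(X) for all X ∈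 g. -/
/-!
Two operators satisfying the Leibniz rule over the same derivation differ by an `A`-linear
endomorphism of `L`; since `L` is a line-bundle module, that endomorphism is multiplication by a
function `c X`. Subtracting the two Hermitian identities at a pair with `h s₀ t₀ = 1` gives
`star (c X) + c X = 0`, i.e. `c X` is imaginary, so `μ X = -(2πi)⁻¹ c X` is real.
-/

section LeibnizRule

variable {A L : Type*} [CommRing A] [AddCommGroup L] [Module A L]

def leibnizSub (δ : A → A) (P Q : L →+ L)
    (hP : ∀ (a : A) (s : L), P (a • s) = a • P s + δ a • s)
    (hQ : ∀ (a : A) (s : L), Q (a • s) = a • Q s + δ a • s) : L →ₗ[A] L where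
  toFun s := P s - Q s
  map_add' s t := by simp only [map_add]; abel
  map_smul' a s := by simp only [hP, hQ, smul_sub, RingHom.id_apply]; abel

theorem exists_eq_add_smul_of_leibniz
    (hsurj : Function.Surjective fun a : A => LinearMap.lsmul A L a)
    {δ : A → A} {P Q : L →+ L} (hP : ∀ (a : A) (s : L), P (a • s) = a • P s + δ a • s)
    (hQ : ∀ (a : A) (s : L), Q (a • s) = a • Q s + δ a • s) :
    ∃ c : A, ∀ s : L, P s = Q s + c • s := by
  obtain ⟨c, hc⟩ := hsurj (leibnizSub δ P Q hP hQ)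
  refine ⟨c, fun s => ?_⟩
  rw [← sub_eq_iff_eq_add']
  exact (LinearMap.congr_fun hc s).symm

end LeibnizRule

theorem star_eq_neg_of_hermitian_eq_add_smul {A L : Type*} [CommRing A] [StarRing A]
    [AddCommGroup L] [Module A L] {h : L → L → A}
    (haddl : ∀ (s s' t : L), h (s + s') t = h s t + h s' t)
    (haddr : ∀ (s t t' : L), h s (t + t') = h s t + h s t')
    (hsmull : ∀ (a : A) (s t : L), h (a • s) t = star a * h s t)
    (hsmulr : ∀ (a : A) (s t : L), h s (a • t) = a * h s t)
    {s₀ t₀ : L} (hone : h s₀ t₀ = 1) {δ : A → A} {P Q : L → L}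
    (hP : ∀ s t : L, h (P s) t + h s (P t) = δ (h s t))
    (hQ : ∀ s t : L, h (Q s) t + h s (Q t) = δ (h s t))
    {c : A} (hc : ∀ s : L, P s = Q s + c • s) : star c = -c := by
  have hPQ := (hP s₀ t₀).trans (hQ s₀ t₀).symm
  rw [hc, hc, haddl, haddr, hsmull, hsmulr, hone] at hPQ
  linear_combination hPQ

theorem hermitian_representation_kostant_form_general
    {A : Type*} [CommRing A] [Algebra ℂ A] [StarRing A]
    {g : Type*} [LieRing g] [LieAlgebra ℝ g]
    {L : Type*} [AddCommGroup L] [Module A L] [Module ℝ L]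
    (hstarA : ∀ (c : ℂ) (a : A), star (c • a) = (starRingEnd ℂ c) • star a)
    (α : g →ₗ[ℝ] Derivation ℂ A A)
    (hline : Function.Bijective fun a : A => LinearMap.lsmul A L a)
    (h : L → L → A)
    (haddl : ∀ (s s' t : L), h (s + s') t = h s t + h s' t)
    (haddr : ∀ (s t t' : L), h s (t + t') = h s t + h s t')
    (hsmull : ∀ (a : A) (s t : L), h (a • s) t = star a * h s t)
    (hsmulr : ∀ (a : A) (s t : L), h s (a • t) = a * h s t)
    (hone : ∃ s₀ t₀ : L, h s₀ t₀ = 1)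
    (D : g →ₗ[ℝ] L →ₗ[ℝ] L)
    (hD : ∀ (X : g) (a : A) (s : L), D X (a • s) = a • D X s + α X a • s)
    (hDherm : ∀ (X : g) (s t : L), h (D X s) t + h s (D X t) = α X (h s t))
    (π : g →ₗ[ℝ] L →ₗ[ℝ] L)
    (hπLeib : ∀ (X : g) (a : A) (s : L), π X (a • s) = a • π X s + α X a • s)
    (hπherm : ∀ (X : g) (s t : L), h (π X s) t + h s (π X t) = α X (h s t)) :
    ∃ μ : g → A,
      (∀ (X : g) (s : L),
        π X s = D X s - ((2 * (Real.pi : ℂ) * Complex.I) • μ X) • s) ∧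
      (∀ X : g, star (μ X) = μ X) ∧
      (∀ μ' : g → A,
        (∀ (X : g) (s : L),
          π X s = D X s - ((2 * (Real.pi : ℂ) * Complex.I) • μ' X) • s) → μ' = μ) := by
  obtain ⟨s₀, t₀, hone⟩ := hone
  set ι : ℂ := 2 * (Real.pi : ℂ) * Complex.I
  have hι : ι ≠ 0 := by simp [ι, Real.pi_ne_zero]
  have hconj : starRingEnd ℂ (-ι⁻¹) = ι⁻¹ := by simp [ι, map_ofNat]
  choose c hc using fun X =>
    exists_eq_add_smul_of_leibniz hline.2
      (P := (π X).toAddMonoidHom) (Q := (D X).toAddMonoidHom) (hπLeib X) (hD X)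
  have hcstar X : star (c X) = -c X :=
    star_eq_neg_of_hermitian_eq_add_smul haddl haddr hsmull hsmulr hone (hπherm X) (hDherm X)
      (hc X)
  have hform X s : π X s = D X s - (ι • (-ι⁻¹) • c X) • s := by
    rw [smul_smul, mul_neg, mul_inv_cancel₀ hι, neg_one_smul, neg_smul, sub_neg_eq_add]
    exact hc X s
  refine ⟨fun X => (-ι⁻¹) • c X, hform, fun X => ?_, fun μ' hμ' => funext fun X => ?_⟩
  · rw [hstarA, hconj, hcstar, smul_neg, ← neg_smul]
  · refine smul_right_injective A hι (hline.1 (LinearMap.ext fun s => ?_))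
    exact sub_right_injective ((hμ' X s).symm.trans (hform X s))

/-- **Every Hermitian representation on a line bundle has Kostant form.**
If `L` is a line-bundle module over `A` (scalar multiplication is a bijection of
`A` onto the `A`-module endomorphisms of `L`) carrying a Hermitian metric `h`
attaining the value `1`, and `D, π : g → End_ℝ(L)` both satisfy the Leibniz rule
over `α` and are Hermitian with respect to `h`, then there is a unique
`μ : g → A` with `π(X) s = D(X) s − ((2πi) • μ(X)) • s`, and this `μ` is
real-valued: `star (μ X) = μ X`. -/
theorem hermitian_representation_kostant_form
    {A : Type*} [CommRing A] [Algebra ℂ A] [StarRing A]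
    {g : Type*} [LieRing g] [LieAlgebra ℝ g]
    {L : Type*} [AddCommGroup L] [Module A L] [Module ℝ L]
    (hstarA : ∀ (c : ℂ) (a : A), star (c • a) = (starRingEnd ℂ c) • star a)
    (α : g →ₗ[ℝ] Derivation ℂ A A)
    (hα : ∀ (X Y : g) (a : A), α ⁅X, Y⁆ a = α X (α Y a) - α Y (α X a))
    (hline : Function.Bijective fun a : A => LinearMap.lsmul A L a)
    (h : L → L → A)
    (haddl : ∀ (s s' t : L), h (s + s') t = h s t + h s' t)
    (haddr : ∀ (s t t' : L), h s (t + t') = h s t + h s t')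
    (hsmull : ∀ (a : A) (s t : L), h (a • s) t = star a * h s t)
    (hsmulr : ∀ (a : A) (s t : L), h s (a • t) = a * h s t)
    (hone : ∃ s₀ t₀ : L, h s₀ t₀ = 1)
    (D : g →ₗ[ℝ] L →ₗ[ℝ] L)
    (hD : ∀ (X : g) (a : A) (s : L), D X (a • s) = a • D X s + α X a • s)
    (hDherm : ∀ (X : g) (s t : L), h (D X s) t + h s (D X t) = α X (h s t))
    (π : g →ₗ[ℝ] L →ₗ[ℝ] L)
    (hπLeib : ∀ (X : g) (a : A) (s : L), π X (a • s) = a • π X s + α X a • s)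
    (hπherm : ∀ (X : g) (s t : L), h (π X s) t + h s (π X t) = α X (h s t)) :
    ∃ μ : g → A,
      (∀ (X : g) (s : L),
        π X s = D X s - ((2 * (Real.pi : ℂ) * Complex.I) • μ X) • s) ∧
      (∀ X : g, star (μ X) = μ X) ∧
      (∀ μ' : g → A,
        (∀ (X : g) (s : L),
          π X s = D X s - ((2 * (Real.pi : ℂ) * Complex.I) • μ' X) • s) → μ' = μ) :=
  hermitian_representation_kostant_form_general hstarA α hline h haddl haddr hsmull hsmulr hone D hD
    hDherm π hπLeib hπherm
end

section
/- A Hamiltonian action is internally strongly Hamiltonian (Lemma: 'If an action of A on (J : S → M, ω̃) is Hamiltonian, then it is internally strongly Hamiltonian', i.e. the momentum map is equivariant: ⟨μ̃, [X,Y]⟩ = α(X)⟨μ̃, J*Y⟩ for Y a section of ker(ρ)): Let V ⊆ Der(A) and Ω be as in the context, let k ⊆ g be a subset with α(Y) ∈ V for every Y ∈ k (modelling the sections of the kernel of the anchor, whose action vector fields are tangent to the fibers of J), and let μ : g → A be an ℝ-linear map satisfying the quantization condition and also the prequantization condition for ω, where ω(X,Y) := Ω(α(X), α(Y)). Then μ([X,Y])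 = α(X)(μ(Y)) for all X ∈ g and Y ∈ k. -/
theorem hamiltonian_implies_internally_strongly_hamiltonian_general
    {A : Type*} [CommRing A] [Algebra ℂ A]
    {g : Type*} [LieRing g] [LieAlgebra ℝ g]
    (α : g →ₗ[ℝ] Derivation ℂ A A)
    (V : Set (Derivation ℂ A A))
    (Ω : Derivation ℂ A A → Derivation ℂ A A → A)
    (k : Set g)
    (hk : ∀ Y ∈ k, α Y ∈ V)
    (μ : g →ₗ[ℝ] A)
    (hquant : ∀ (X : g), ∀ v ∈ V, v (μ X) = - Ω (α X) v)
    (hpreq : ∀ X Y : g, μ ⁅X, Y⁆ - α X (μ Y) + α Y (μ X) = - Ω (α X) (α Y)) :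
    ∀ (X : g), ∀ Y ∈ k, μ ⁅X, Y⁆ = α X (μ Y) := by
  intro X Y hY
  have hαY : α Y (μ X) = - Ω (α X) (α Y) := hquant X (α Y) (hk Y hY)
  linear_combination hpreq X Y - hαY

/-- **A Hamiltonian action is internally strongly Hamiltonian.**
If `μ : g → A` satisfies the quantization condition and the prequantization
condition for `ω(X,Y) = Ω(α X, α Y)`, and `k ⊆ g` models the sections of the
kernel of the anchor (so `α Y ∈ V` for `Y ∈ k`), then
`μ([X,Y]) = α(X)(μ(Y))` for all `X ∈ g` and `Y ∈ k`, i.e. the momentum map is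
equivariant. -/
theorem hamiltonian_implies_internally_strongly_hamiltonian
    {A : Type*} [CommRing A] [Algebra ℂ A]
    {g : Type*} [LieRing g] [LieAlgebra ℝ g]
    (α : g →ₗ[ℝ] Derivation ℂ A A)
    (hα : ∀ (X Y : g) (a : A), α ⁅X, Y⁆ a = α X (α Y a) - α Y (α X a))
    (V : Set (Derivation ℂ A A))
    (hVadd : ∀ v ∈ V, ∀ w ∈ V, v + w ∈ V)
    (hVsmul : ∀ (r : ℝ), ∀ v ∈ V, r • v ∈ V)
    (hVlie : ∀ v ∈ V, ∀ w ∈ V, ⁅v, w⁆ ∈ V)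
    (hαV : ∀ X : g, α X ∈ V)
    (Ω : Derivation ℂ A A → Derivation ℂ A A → A)
    (hΩalt : ∀ v ∈ V, Ω v v = 0)
    (hΩanti : ∀ v ∈ V, ∀ w ∈ V, Ω v w = - Ω w v)
    (k : Set g)
    (hk : ∀ Y ∈ k, α Y ∈ V)
    (μ : g →ₗ[ℝ] A)
    (hquant : ∀ (X : g), ∀ v ∈ V, v (μ X) = - Ω (α X) v)
    (hpreq : ∀ X Y : g, μ ⁅X, Y⁆ - α X (μ Y) + α Y (μ X) = - Ω (α X) (α Y)) :
    ∀ (X : g), ∀ Y ∈ k, μ ⁅X, Y⁆ = α X (μ Y) :=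
  hamiltonian_implies_internally_strongly_hamiltonian_general α V Ω k hk μ hquant hpreq
end

section
/- Perturbing the presymplectic form by an exact form (Lemma: 'for any β ∈ Ω¹_{J̃}(S), the action of A on (J : S → M, ω̃ + d^{J̃}β) is Hamiltonian iff L_{α(X)}β annihilates T^J S for all X ∈ Γ∞(A)', with momentum map μ̃' := μ̃ + α*β): Let V ⊆ Der(A) and Ω be as in the context, let μ : g → A be an ℝ-linear map satisfying the quantization condition and also the prequantization condition for ω, where ω(X,Y) := Ω(α(X), α(Y)), and let β : V → A be an A-linear map (a 1-form along J̃). Define dβ(v, w) := v(β(w)) − w(β(v)) − β([v, w]) and (L_v β)(w) := v(β(w)) − β([v, w]) for v, w ∈ V, and set μ'(X) := μ(X) + β(α(X)). Then: (i) μ' satisfies the prequantization condition for ω', where ω'(X,Y) := ω(X,Y) + dβ(α(X), α(Y)); and (ii) μ' satisfies the perturbed quantization condition v(μ'(X)) = −(Ω(α(X), v) + dβ(α(X), v)) for all X ∈ g and v ∈ V if and only if (L_{α(X)} β)(v) = 0 for all X ∈ g and v ∈ V. -/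
/-- **Perturbing the presymplectic form by an exact form.**
Given a momentum map `μ` for `Ω` (quantization and prequantization conditions)
and a 1-form `β` along `J̃` (an `A`-linear functional on the derivations), set
`μ'(X) := μ(X) + β(α X)`.  Then (i) `μ'` satisfies the prequantization condition
for the perturbed form `ω' = ω + dβ∘(α × α)`, and (ii) `μ'` satisfies the
perturbed quantization condition iff the Lie derivative `L_{α X} β` vanishes on
`V` for all `X`. -/
theorem perturbation_by_exact_form
    {A : Type*} [CommRing A] [Algebra ℂ A]
    {g : Type*} [LieRing g] [LieAlgebra ℝ g]
    (α : g →ₗ[ℝ] Derivation ℂ A A)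
    (hα : ∀ (X Y : g) (a : A), α ⁅X, Y⁆ a = α X (α Y a) - α Y (α X a))
    (V : Set (Derivation ℂ A A))
    (hVadd : ∀ v ∈ V, ∀ w ∈ V, v + w ∈ V)
    (hVsmul : ∀ (r : ℝ), ∀ v ∈ V, r • v ∈ V)
    (hVlie : ∀ v ∈ V, ∀ w ∈ V, ⁅v, w⁆ ∈ V)
    (hαV : ∀ X : g, α X ∈ V)
    (Ω : Derivation ℂ A A → Derivation ℂ A A → A)
    (hΩalt : ∀ v ∈ V, Ω v v = 0)
    (hΩanti : ∀ v ∈ V, ∀ w ∈ V, Ω v w = - Ω w v)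
    (μ : g →ₗ[ℝ] A)
    (hquant : ∀ (X : g), ∀ v ∈ V, v (μ X) = - Ω (α X) v)
    (hpreq : ∀ X Y : g, μ ⁅X, Y⁆ - α X (μ Y) + α Y (μ X) = - Ω (α X) (α Y))
    (β : Derivation ℂ A A →ₗ[A] A)
    (dβ : Derivation ℂ A A → Derivation ℂ A A → A)
    (hdβ : ∀ v w : Derivation ℂ A A, dβ v w = v (β w) - w (β v) - β ⁅v, w⁆)
    (Lβ : Derivation ℂ A A → Derivation ℂ A A → A)
    (hLβ : ∀ v w : Derivation ℂ A A, Lβ v w = v (β w) - β ⁅v, w⁆)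
    (μ' : g → A)
    (hμ' : ∀ X : g, μ' X = μ X + β (α X)) :
    (∀ X Y : g, μ' ⁅X, Y⁆ - α X (μ' Y) + α Y (μ' X)
        = - (Ω (α X) (α Y) + dβ (α X) (α Y))) ∧
    ((∀ (X : g), ∀ v ∈ V, v (μ' X) = - (Ω (α X) v + dβ (α X) v)) ↔
      (∀ (X : g), ∀ v ∈ V, Lβ (α X) v = 0)) := by
  have hαlie : ∀ X Y : g, α ⁅X, Y⁆ = ⁅α X, α Y⁆ := by
    intro X Y
    ext a
    rw [hα, Derivation.commutator_apply]
  constructor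
  · intro X Y
    have h := hpreq X Y
    rw [hμ' ⁅X, Y⁆, hμ' X, hμ' Y, hdβ, ← hαlie,
      map_add, map_add]
    ring_nf
    linear_combination h
  · constructor
    · intro h X v hv
      have h1 := h X v hv
      rw [hμ' X, map_add, hquant X v hv, hdβ, hLβ] at *
      linear_combination h1
    · intro h X v hv
      have h1 := h X v hv
      rw [hLβ] at h1
      rw [hμ' X, map_add, hquant X v hv, hdβ]
      linear_combination h1
end

section
/- Non-uniqueness of the momentum map (Lemma: 'if μ̃ is a momentum map and β ∈ Ω¹_{J̃}(S), then μ̃' := μ̃ + α*β is a momentum map for the action too iff d^{J̃}β = 0 and L_{α(X)}β annihilates T_J S for all X ∈ Γ(A)'): Let V ⊆ Der(A) and Ω be as in the context, let μ : g → A be an ℝ-linear map satisfying the quantization condition and also the prequantization condition for ω, where ω(X,Y) := Ω(α(X), α(Y)), and let β : V → A be an A-linear map (a 1-form along J̃). Define dβ(v, w) := v(β(w)) − w(β(v)) − β([v, w]) for v, w ∈ V, and set μ'(X) := μ(X) + β(α(X)). Then μ' satisfies both the quantization condition and the prequantization condition for the same ω if and only if dβ(α(X), α(Y)) = 0 for all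 X, Y ∈ g and v(β(α(X))) = 0 for all X ∈ g and v ∈ V. -/
/-!
Both conditions are affine in the moment map: adding `b` to a solution `μ` of the quantization
condition gives a solution iff every `v ∈ V` kills `b X`, and adding `b` to a solution of the
prequantization condition gives a solution iff the Chevalley–Eilenberg coboundary of `b`
vanishes. For `b = β ∘ α` that coboundary is `-dβ(α X, α Y)`, because `α` is a Lie algebra
morphism into the derivations.
-/

namespace Derivation

variable {R A : Type*} [CommRing R] [CommRing A] [Algebra R A]

theorem eq_commutator_of_apply {D D₁ D₂ : Derivation R A A}
    (h : ∀ a, D a = D₁ (D₂ a) - D₂ (D₁ a)) : D = ⁅D₁, D₂⁆ := by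
  ext a
  rw [h, commutator_apply]

def oneFormDeriv (β : Derivation R A A → A) (v w : Derivation R A A) : A :=
  v (β w) - w (β v) - β ⁅v, w⁆

end Derivation

open Derivation

namespace MomentumMap

variable {A : Type*} [CommRing A] [Algebra ℂ A] {g : Type*}

def QuantizationCondition (V : Set (Derivation ℂ A A)) (α : g → Derivation ℂ A A)
    (Ω : Derivation ℂ A A → Derivation ℂ A A → A) (μ : g → A) : Prop :=
  ∀ X : g, ∀ v ∈ V, v (μ X) = - Ω (α X) v

theorem quantizationCondition_add_iff {V : Set (Derivation ℂ A A)} {α : g → Derivation ℂ A A}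
    {Ω : Derivation ℂ A A → Derivation ℂ A A → A} {μ : g → A}
    (hμ : QuantizationCondition V α Ω μ) (b : g → A) :
    QuantizationCondition V α Ω (μ + b) ↔ ∀ X : g, ∀ v ∈ V, v (b X) = 0 := by
  refine forall_congr' fun X => forall₂_congr fun v hv => ?_
  rw [Pi.add_apply, map_add, hμ X v hv, add_eq_left]

variable [Bracket g g]

/-- Minus the Chevalley–Eilenberg differential of the cochain `f` for the action `α`. -/
def coboundary (α : g → Derivation ℂ A A) (f : g → A) (X Y : g) : A :=
  f ⁅X, Y⁆ - α X (f Y) + α Y (f X)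

theorem coboundary_add (α : g → Derivation ℂ A A) (f b : g → A) (X Y : g) :
    coboundary α (f + b) X Y = coboundary α f X Y + coboundary α b X Y := by
  simp only [coboundary, Pi.add_apply, map_add]
  ring

theorem coboundary_comp {α : g → Derivation ℂ A A} {X Y : g} (hα : α ⁅X, Y⁆ = ⁅α X, α Y⁆)
    (β : Derivation ℂ A A → A) :
    coboundary α (β ∘ α) X Y = - oneFormDeriv β (α X) (α Y) := by
  simp only [coboundary, oneFormDeriv, Function.comp_apply, hα]
  ring

def PrequantizationCondition (α : g → Derivation ℂ A A) (ω : g → g → A) (μ : g → A) : Prop :=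
  ∀ X Y : g, coboundary α μ X Y = - ω X Y

theorem prequantizationCondition_add_iff {α : g → Derivation ℂ A A} {ω : g → g → A} {μ : g → A}
    (hμ : PrequantizationCondition α ω μ) (b : g → A) :
    PrequantizationCondition α ω (μ + b) ↔ ∀ X Y : g, coboundary α b X Y = 0 := by
  refine forall₂_congr fun X Y => ?_
  rw [coboundary_add, hμ X Y, add_eq_left]

end MomentumMap

open MomentumMap

theorem momentum_map_nonuniqueness_general
    {A : Type*} [CommRing A] [Algebra ℂ A]
    {g : Type*} [LieRing g] [LieAlgebra ℝ g]
    (α : g →ₗ[ℝ] Derivation ℂ A A)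
    (hα : ∀ (X Y : g) (a : A), α ⁅X, Y⁆ a = α X (α Y a) - α Y (α X a))
    (V : Set (Derivation ℂ A A))
    (Ω : Derivation ℂ A A → Derivation ℂ A A → A)
    (μ : g →ₗ[ℝ] A)
    (hquant : ∀ (X : g), ∀ v ∈ V, v (μ X) = - Ω (α X) v)
    (hpreq : ∀ X Y : g, μ ⁅X, Y⁆ - α X (μ Y) + α Y (μ X) = - Ω (α X) (α Y))
    (β : Derivation ℂ A A →ₗ[A] A)
    (dβ : Derivation ℂ A A → Derivation ℂ A A → A)
    (hdβ : ∀ v w : Derivation ℂ A A, dβ v w = v (β w) - w (β v) - β ⁅v, w⁆)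
    (μ' : g → A)
    (hμ' : ∀ X : g, μ' X = μ X + β (α X)) :
    ((∀ (X : g), ∀ v ∈ V, v (μ' X) = - Ω (α X) v) ∧
     (∀ X Y : g, μ' ⁅X, Y⁆ - α X (μ' Y) + α Y (μ' X) = - Ω (α X) (α Y))) ↔
    ((∀ X Y : g, dβ (α X) (α Y) = 0) ∧
     (∀ (X : g), ∀ v ∈ V, v (β (α X)) = 0)) := by
  obtain rfl : μ' = ⇑μ + ⇑β ∘ ⇑α := funext hμ'
  obtain rfl : dβ = oneFormDeriv ⇑β := funext₂ hdβ
  have hprequant : PrequantizationCondition α (fun X Y => Ω (α X) (α Y)) (⇑μ + ⇑β ∘ ⇑α) ↔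
      ∀ X Y : g, oneFormDeriv β (α X) (α Y) = 0 := by
    rw [prequantizationCondition_add_iff hpreq]
    refine forall₂_congr fun X Y => ?_
    rw [coboundary_comp (eq_commutator_of_apply (hα X Y)), neg_eq_zero]
  exact (and_congr (quantizationCondition_add_iff hquant _) hprequant).trans and_comm

/-- **Non-uniqueness of the momentum map.**
If `μ` is a momentum map (quantization and prequantization conditions for
`ω(X,Y) = Ω(α X, α Y)`) and `β` is a 1-form along `J̃`, then
`μ'(X) := μ(X) + β(α X)` is again a momentum map for the same `ω` iff
`dβ(α X, α Y) = 0` for all `X, Y` and `v(β(α X)) = 0` for all `X` and `v ∈ V`. -/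
theorem momentum_map_nonuniqueness
    {A : Type*} [CommRing A] [Algebra ℂ A]
    {g : Type*} [LieRing g] [LieAlgebra ℝ g]
    (α : g →ₗ[ℝ] Derivation ℂ A A)
    (hα : ∀ (X Y : g) (a : A), α ⁅X, Y⁆ a = α X (α Y a) - α Y (α X a))
    (V : Set (Derivation ℂ A A))
    (hVadd : ∀ v ∈ V, ∀ w ∈ V, v + w ∈ V)
    (hVsmul : ∀ (r : ℝ), ∀ v ∈ V, r • v ∈ V)
    (hVlie : ∀ v ∈ V, ∀ w ∈ V, ⁅v, w⁆ ∈ V)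
    (hαV : ∀ X : g, α X ∈ V)
    (Ω : Derivation ℂ A A → Derivation ℂ A A → A)
    (hΩalt : ∀ v ∈ V, Ω v v = 0)
    (hΩanti : ∀ v ∈ V, ∀ w ∈ V, Ω v w = - Ω w v)
    (μ : g →ₗ[ℝ] A)
    (hquant : ∀ (X : g), ∀ v ∈ V, v (μ X) = - Ω (α X) v)
    (hpreq : ∀ X Y : g, μ ⁅X, Y⁆ - α X (μ Y) + α Y (μ X) = - Ω (α X) (α Y))
    (β : Derivation ℂ A A →ₗ[A] A)
    (dβ : Derivation ℂ A A → Derivation ℂ A A → A)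
    (hdβ : ∀ v w : Derivation ℂ A A, dβ v w = v (β w) - w (β v) - β ⁅v, w⁆)
    (μ' : g → A)
    (hμ' : ∀ X : g, μ' X = μ X + β (α X)) :
    ((∀ (X : g), ∀ v ∈ V, v (μ' X) = - Ω (α X) v) ∧
     (∀ X Y : g, μ' ⁅X, Y⁆ - α X (μ' Y) + α Y (μ' X) = - Ω (α X) (α Y))) ↔
    ((∀ X Y : g, dβ (α X) (α Y) = 0) ∧
     (∀ (X : g), ∀ v ∈ V, v (β (α X)) = 0)) :=
  momentum_map_nonuniqueness_general α hα V Ω μ hquant hpreq β dβ hdβ μ' hμ'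
end
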